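/- arXiv:2210.13504 — 5 statements merged into one kernel-verified Lean document; each statement's English description precedes it below -/
import Mathlib

section
/- Let S be a finite nonempty set, p ∈ Δ(S), d ≥ 0, V : S → ℝ, and let s* ∈ S be a state with V(s*) = max_{s∈S} V(s). Then the maximum of the linear objective ∑_{s∈S} q(s) V(s) over the polytope { q ∈ Δ(S) : ‖q − p‖₁ ≤ d } is attained at some q̃ satisfying q̃(s*) = min(1, p(s*) + d/2) and q̃(s) ≤ p(s) for all s ≠ s*. (This is the correctness of the per-state step of finite-horizon extended value iteration, which puts as much probability as possible on the state of maximal value at the expense of states of small value.) -/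
/-!
Let `m = min (1 - p s⋆) (d / 2)`. Removing mass `m` from the states `s ≠ s⋆` of lowest value and
adding it to `s⋆` gives a feasible `q̃` with a threshold `θ ≤ V s⋆`: off `s⋆`, `q̃` vanishes where
`V < θ` and agrees with `p` where `V > θ`. The function `ψ = max V θ` takes values in
`[θ, V s⋆]`, so every feasible `q` satisfies `∑ q V ≤ ∑ q ψ ≤ ∑ p ψ + (V s⋆ - θ) ‖q - p‖₁ / 2`,
while `∑ q̃ V = ∑ p ψ + (V s⋆ - θ) m`. This settles the case `m = d / 2`; if `m = 1 - p s⋆`,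
then `q̃` is the point mass at `s⋆` and the same bound holds with `θ = V s⋆`.
-/

open Finset

section

variable {ι : Type*}

theorem exists_threshold_removal [DecidableEq ι] (V p : ι → ℝ) (E : Finset ι)
    (hp : ∀ i ∈ E, 0 ≤ p i) {M : ℝ} (hVM : ∀ i ∈ E, V i ≤ M) {m : ℝ} (hm₀ : 0 ≤ m)
    (hmE : m ≤ ∑ i ∈ E, p i) :
    ∃ θ ≤ M, ∃ r : ι → ℝ, (∀ i ∈ E, 0 ≤ r i ∧ r i ≤ p i) ∧ (∀ i ∈ E, V i < θ → r i = p i) ∧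
      (∀ i ∈ E, θ < V i → r i = 0) ∧ ∑ i ∈ E, r i = m := by
  induction E using Finset.induction_on_min_value V generalizing m with
  | empty =>
    refine ⟨M, le_rfl, 0, by simp, by simp, by simp, ?_⟩
    simp only [sum_empty] at hmE ⊢
    linarith
  | insert a E ha hmin ih =>
    rw [forall_mem_insert] at hp hVM
    rw [sum_insert ha] at hmE
    have hne : ∀ i ∈ E, i ≠ a := fun i hi => ne_of_mem_of_not_mem hi ha
    by_cases hma : m ≤ p a
    · refine ⟨V a, hVM.1, Pi.single a m, ?_, ?_, ?_, ?_⟩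
      · simp +contextual [hm₀, hma, hne, hp.2]
      · simp +contextual [hne, (hmin _ _).not_gt]
      · simp +contextual [hne]
      · simp +contextual [sum_insert ha, hne]
    · push Not at hma
      obtain ⟨θ, hθ, r, hr, hr_low, hr_high, hr_sum⟩ :=
        ih hp.2 hVM.2 (sub_nonneg.2 hma.le) (by linarith)
      have hθa : V a ≤ θ := by
        by_contra! h
        have : ∑ i ∈ E, r i = 0 :=
          sum_eq_zero fun i hi => hr_high i hi (h.trans_le (hmin i hi))
        linarith
      refine ⟨θ, hθ, Function.update r a (p a), ?_, ?_, ?_, ?_⟩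
      · simp +contextual [hp.1, hne, hr]
      · simp +contextual [hne, hr_low]
      · simp +contextual [hne, hr_high, hθa.not_gt]
      · rw [sum_insert ha, Function.update_self,
          sum_congr rfl fun i hi => Function.update_of_ne (hne i hi) _ _, hr_sum]
        ring

section Transfer

variable [Fintype ι] [DecidableEq ι]

def transferMass (p r : ι → ℝ) (s₀ : ι) : ι → ℝ :=
  Function.update (p - r) s₀ (p s₀ + ∑ s ∈ univ.erase s₀, r s)

variable {p r V : ι → ℝ} {s₀ : ι} {θ : ℝ}

@[simp]
theorem transferMass_self : transferMass p r s₀ s₀ = p s₀ + ∑ s ∈ univ.erase s₀, r s :=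
  Function.update_self ..

@[simp]
theorem transferMass_of_ne {s : ι} (hs : s ≠ s₀) : transferMass p r s₀ s = p s - r s :=
  Function.update_of_ne hs ..

theorem sum_transferMass : ∑ s, transferMass p r s₀ s = ∑ s, p s := by
  rw [← add_sum_erase _ _ (mem_univ s₀), ← add_sum_erase _ p (mem_univ s₀), transferMass_self,
    sum_congr rfl fun s hs => transferMass_of_ne (ne_of_mem_erase hs), sum_sub_distrib]
  ring

theorem sum_abs_transferMass_sub (hr : ∀ s ∈ univ.erase s₀, 0 ≤ r s) :
    ∑ s, |transferMass p r s₀ s - p s| = 2 * ∑ s ∈ univ.erase s₀, r s := by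
  have hne : ∀ s ∈ univ.erase s₀, |transferMass p r s₀ s - p s| = r s := fun s hs => by
    rw [transferMass_of_ne (ne_of_mem_erase hs), sub_sub_cancel_left, abs_neg,
      abs_of_nonneg (hr s hs)]
  rw [← add_sum_erase _ _ (mem_univ s₀), sum_congr rfl hne, transferMass_self,
    add_sub_cancel_left, abs_of_nonneg (sum_nonneg hr)]
  ring

theorem transferMass_nonneg (hp : ∀ s, 0 ≤ p s)
    (hr : ∀ s ∈ univ.erase s₀, 0 ≤ r s ∧ r s ≤ p s) (s : ι) : 0 ≤ transferMass p r s₀ s := by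
  rcases eq_or_ne s s₀ with rfl | hs
  · rw [transferMass_self]
    exact add_nonneg (hp s) (sum_nonneg fun i hi => (hr i hi).1)
  · rw [transferMass_of_ne hs, sub_nonneg]
    exact (hr s (mem_erase.2 ⟨hs, mem_univ s⟩)).2

theorem transferMass_le_of_ne {s : ι} (hs : s ≠ s₀) (hr : 0 ≤ r s) :
    transferMass p r s₀ s ≤ p s := by
  rw [transferMass_of_ne hs]
  linarith

theorem transferMass_eq_zero_of_lt (hθ : θ ≤ V s₀)
    (hr : ∀ s ∈ univ.erase s₀, V s < θ → r s = p s) (s : ι) (hs : V s < θ) :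
    transferMass p r s₀ s = 0 := by
  have hne : s ≠ s₀ := by rintro rfl; linarith
  rw [transferMass_of_ne hne, hr s (mem_erase.2 ⟨hne, mem_univ s⟩) hs, sub_self]

theorem transferMass_eq_of_lt (hr : ∀ s ∈ univ.erase s₀, θ < V s → r s = 0) (s : ι)
    (hne : s ≠ s₀) (hs : θ < V s) : transferMass p r s₀ s = p s := by
  rw [transferMass_of_ne hne, hr s (mem_erase.2 ⟨hne, mem_univ s⟩) hs, sub_zero]

end Transfer

section Certificate

variable [Fintype ι]

theorem sum_mul_sub_sum_mul_eq {q p : ι → ℝ} (hsum : ∑ i, q i = ∑ i, p i) (f : ι → ℝ) (c : ℝ) :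
    ∑ i, q i * f i - ∑ i, p i * f i = ∑ i, (q i - p i) * (f i - c) := by
  simp only [mul_sub, sub_mul, sum_sub_distrib, ← sum_mul, hsum]
  ring

variable {q q' p V : ι → ℝ} {θ : ℝ}

theorem sum_mul_le_sum_mul_max_add {M : ℝ} (hθ : θ ≤ M) (hV : ∀ i, V i ≤ M)
    (hq : ∀ i, 0 ≤ q i) (hsum : ∑ i, q i = ∑ i, p i) :
    ∑ i, q i * V i ≤ ∑ i, p i * max (V i) θ + (M - θ) / 2 * ∑ i, |q i - p i| := by
  have hψ : ∀ i, |max (V i) θ - (M + θ) / 2| ≤ (M - θ) / 2 := fun i =>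
    abs_le.2 ⟨by linarith [le_max_right (V i) θ], by linarith [max_le (hV i) hθ]⟩
  calc ∑ i, q i * V i ≤ ∑ i, q i * max (V i) θ :=
        sum_le_sum fun i _ => mul_le_mul_of_nonneg_left (le_max_left _ _) (hq i)
    _ = ∑ i, p i * max (V i) θ + ∑ i, (q i - p i) * (max (V i) θ - (M + θ) / 2) := by
        rw [← sum_mul_sub_sum_mul_eq hsum]; ring
    _ ≤ ∑ i, p i * max (V i) θ + ∑ i, |q i - p i| * ((M - θ) / 2) := by
        refine add_le_add_right (sum_le_sum fun i _ => ?_) _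
        calc (q i - p i) * (max (V i) θ - (M + θ) / 2)
            ≤ |q i - p i| * |max (V i) θ - (M + θ) / 2| := (le_abs_self _).trans (abs_mul _ _).le
          _ ≤ |q i - p i| * ((M - θ) / 2) := mul_le_mul_of_nonneg_left (hψ i) (abs_nonneg _)
    _ = _ := by rw [← sum_mul, mul_comm]

theorem sum_mul_eq_sum_mul_max_add {s₀ : ι} (hθ : θ ≤ V s₀) (hsum : ∑ i, q i = ∑ i, p i)
    (hlow : ∀ i, V i < θ → q i = 0) (hhigh : ∀ i ≠ s₀, θ < V i → q i = p i) :
    ∑ i, q i * V i = ∑ i, p i * max (V i) θ + (V s₀ - θ) * (q s₀ - p s₀) := by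
  have hmax : ∀ i, q i * V i = q i * max (V i) θ := fun i => by
    rcases lt_or_ge (V i) θ with h | h
    · simp [hlow i h]
    · rw [max_eq_left h]
  have hflat : ∀ i ≠ s₀, (q i - p i) * (max (V i) θ - θ) = 0 := fun i hi => by
    rcases lt_or_ge θ (V i) with h | h
    · rw [hhigh i hi h, sub_self, zero_mul]
    · rw [max_eq_right h, sub_self, mul_zero]
  rw [sum_congr rfl fun i _ => hmax i, ← sub_eq_iff_eq_add', sum_mul_sub_sum_mul_eq hsum _ θ,
    sum_eq_single s₀ (fun i _ => hflat i) (by simp), max_eq_left hθ, mul_comm]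

theorem sum_mul_le_of_threshold {s₀ : ι} (hθ : θ ≤ V s₀) (hV : ∀ i, V i ≤ V s₀)
    (hq : ∀ i, 0 ≤ q i) (hsum : ∑ i, q i = ∑ i, p i) (hsum' : ∑ i, q' i = ∑ i, p i)
    (hlow : ∀ i, V i < θ → q' i = 0) (hhigh : ∀ i ≠ s₀, θ < V i → q' i = p i) :
    ∑ i, q i * V i ≤
      ∑ i, q' i * V i + (V s₀ - θ) * ((∑ i, |q i - p i|) / 2 - (q' s₀ - p s₀)) := by
  linarith [sum_mul_le_sum_mul_max_add hθ hV hq hsum,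
    sum_mul_eq_sum_mul_max_add hθ hsum' hlow hhigh]

end Certificate

end

theorem extended_value_iteration_step_general {S : Type*} [Fintype S]
    (p : S → ℝ) (hp₀ : ∀ s, 0 ≤ p s) (hp₁ : ∑ s : S, p s = 1)
    (d : ℝ) (hd : 0 ≤ d) (V : S → ℝ) (sstar : S) (hsstar : ∀ s, V s ≤ V sstar) :
    ∃ qt : S → ℝ,
      (∀ s, 0 ≤ qt s) ∧ (∑ s : S, qt s = 1) ∧ (∑ s : S, |qt s - p s| ≤ d) ∧
      qt sstar = min 1 (p sstar + d / 2) ∧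
      (∀ s, s ≠ sstar → qt s ≤ p s) ∧
      ∀ q : S → ℝ, (∀ s, 0 ≤ q s) → (∑ s : S, q s = 1) → (∑ s : S, |q s - p s| ≤ d) →
        ∑ s : S, q s * V s ≤ ∑ s : S, qt s * V s := by
  classical
  set E := univ.erase sstar
  set m := min (1 - p sstar) (d / 2)
  have hpE : ∑ s ∈ E, p s = 1 - p sstar := by rw [sum_erase_eq_sub (mem_univ _), hp₁]
  have hm₀ : 0 ≤ m := le_min (hpE ▸ sum_nonneg fun s _ => hp₀ s) (by linarith)
  have hmE : m ≤ ∑ s ∈ E, p s := hpE ▸ min_le_left _ _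
  obtain ⟨θ, hθ, r, hr, hr_low, hr_high, hr_sum⟩ :=
    exists_threshold_removal V p E (fun s _ => hp₀ s) (fun s _ => hsstar s) hm₀ hmE
  have hqt_sum : ∑ s, transferMass p r sstar s = ∑ s, p s := sum_transferMass
  refine ⟨transferMass p r sstar, transferMass_nonneg hp₀ hr, hqt_sum.trans hp₁, ?_,
    by rw [transferMass_self, hr_sum, ← min_add_add_left, add_sub_cancel],
    fun s hs => transferMass_le_of_ne hs (hr s (mem_erase.2 ⟨hs, mem_univ s⟩)).1,
    fun q hq₀ hq₁ hqd => ?_⟩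
  · rw [sum_abs_transferMass_sub fun s hs => (hr s hs).1, hr_sum]
    linarith [min_le_right (1 - p sstar) (d / 2)]
  have hqp := hq₁.trans hp₁.symm
  by_cases hcase : d / 2 ≤ 1 - p sstar
  · refine (sum_mul_le_of_threshold hθ hsstar hq₀ hqp hqt_sum
      (transferMass_eq_zero_of_lt hθ hr_low) (transferMass_eq_of_lt hr_high)).trans
      (add_le_of_nonpos_right (mul_nonpos_of_nonneg_of_nonpos (sub_nonneg.2 hθ) ?_))
    rw [transferMass_self, hr_sum, show m = d / 2 from min_eq_right hcase]
    linarith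
  · have hrp : ∀ s ∈ E, r s = p s := (sum_eq_sum_iff_of_le fun s hs => (hr s hs).2).1
      (by rw [hr_sum, hpE]; exact min_eq_left (by linarith))
    refine (sum_mul_le_of_threshold le_rfl hsstar hq₀ hqp hqt_sum
      (transferMass_eq_zero_of_lt le_rfl fun s hs _ => hrp s hs)
      (transferMass_eq_of_lt fun s _ hs => absurd (hsstar s) hs.not_ge)).trans ?_
    simp

/-- **Correctness of the per-state step of finite-horizon extended value iteration.**
For `p ∈ Δ(S)`, `d ≥ 0`, `V : S → ℝ` and a state `s*` of maximal value, the maximum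
of the linear objective `∑_s q(s) V(s)` over the polytope
`{ q ∈ Δ(S) : ‖q − p‖₁ ≤ d }` is attained at some `q̃` with
`q̃(s*) = min(1, p(s*) + d/2)` and `q̃(s) ≤ p(s)` for all `s ≠ s*`. -/
theorem extended_value_iteration_step {S : Type*} [Fintype S] [Nonempty S]
    (p : S → ℝ) (hp₀ : ∀ s, 0 ≤ p s) (hp₁ : ∑ s : S, p s = 1)
    (d : ℝ) (hd : 0 ≤ d) (V : S → ℝ) (sstar : S) (hsstar : ∀ s, V s ≤ V sstar) :
    ∃ qt : S → ℝ,
      (∀ s, 0 ≤ qt s) ∧ (∑ s : S, qt s = 1) ∧ (∑ s : S, |qt s - p s| ≤ d) ∧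
      qt sstar = min 1 (p sstar + d / 2) ∧
      (∀ s, s ≠ sstar → qt s ≤ p s) ∧
      ∀ q : S → ℝ, (∀ s, 0 ≤ q s) → (∑ s : S, q s = 1) → (∑ s : S, |q s - p s| ≤ d) →
        ∑ s : S, q s * V s ≤ ∑ s : S, qt s * V s :=
  extended_value_iteration_step_general p hp₀ hp₁ d hd V sstar hsstar
end

section
/- Optimism: if the true transition kernel P belongs to the plausible kernel set, i.e., ‖P(·|s,a) − P̂(·|s,a)‖₁ ≤ d(s,a) for every pair (s,a) ∈ S × A, then the optimistic value of extended value iteration upper-bounds the true optimal value: Ṽ_h(s) ≥ V*_h(s) for every step h ∈ {1,…,H+1} and every state s ∈ S, where V* is the optimal value function of the MDP (S, A, H, P, r). -/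
/-- Value of policy `π` in the finite-horizon MDP `(S, A, H, P, r)` with `j` steps
remaining; the value `V^π_h` at step `h ∈ {1,…,H+1}` is `polVal H P r π (H + 1 - h)`. -/
noncomputable def polVal {S A : Type*} [Fintype S] (H : ℕ) (P : S → A → S → ℝ)
    (r : S → A → ℝ) (π : S → ℕ → A) : ℕ → S → ℝ
  | 0, _ => 0
  | j + 1, s =>
      r s (π s (H - j)) + ∑ s' : S, P s (π s (H - j)) s' * polVal H P r π j s'

/-- `Vpi H P r π h s = V^π_h(s)`, the value function of policy `π`, defined by backward
induction: `V^π_{H+1}(s) = 0` and `V^π_h(s) = r(s,π(s,h)) + ∑_{s'} P(s'|s,π(s,h)) V^π_{h+1}(s')`. -/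
noncomputable def Vpi {S A : Type*} [Fintype S] (H : ℕ) (P : S → A → S → ℝ)
    (r : S → A → ℝ) (π : S → ℕ → A) (h : ℕ) (s : S) : ℝ :=
  polVal H P r π (H + 1 - h) s

/-- Optimal value function `V*_h(s) = sup_π V^π_h(s)`. -/
noncomputable def Vstar {S A : Type*} [Fintype S] (H : ℕ) (P : S → A → S → ℝ)
    (r : S → A → ℝ) (h : ℕ) (s : S) : ℝ :=
  ⨆ π : S → ℕ → A, Vpi H P r π h s

/-- `q` is a probability vector on the finite set `S`. -/
def IsProbVec {S : Type*} [Fintype S] (q : S → ℝ) : Prop :=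
  (∀ s, 0 ≤ q s) ∧ ∑ s : S, q s = 1

/-- `P'` belongs to the plausible kernel set `M(P̂, d)`: every row `P'(·|s,a)` is a
probability vector within `ℓ¹`-distance `d(s,a)` of the empirical row `P̂(·|s,a)`. -/
def IsPlausible {S A : Type*} [Fintype S] (Phat : S → A → S → ℝ) (d : S → A → ℝ)
    (P' : S → A → S → ℝ) : Prop :=
  ∀ s a, IsProbVec (P' s a) ∧ ∑ s' : S, |P' s a s' - Phat s a s'| ≤ d s a

/-- Inner maximization of extended value iteration:
`max { ∑_{s'} q(s') W(s') : q ∈ Δ(S), ‖q − p̂‖₁ ≤ d }`. -/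
noncomputable def innerOpt {S : Type*} [Fintype S] (phat : S → ℝ) (d : ℝ)
    (W : S → ℝ) : ℝ :=
  sSup { x : ℝ | ∃ q : S → ℝ, IsProbVec q ∧ (∑ s : S, |q s - phat s| ≤ d) ∧
    x = ∑ s : S, q s * W s }

/-- Optimistic value of extended value iteration with `j` steps remaining;
the optimistic value `Ṽ_h` at step `h ∈ {1,…,H+1}` is `optVal H Phat d r (H + 1 - h)`. -/
noncomputable def optVal {S A : Type*} [Fintype S] [Fintype A] (H : ℕ)
    (Phat : S → A → S → ℝ) (d : S → A → ℝ) (r : S → A → ℝ) : ℕ → S → ℝ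
  | 0, _ => 0
  | j + 1, s =>
      ⨆ a : A, (r s a + innerOpt (Phat s a) (d s a) (optVal H Phat d r j))

/-- `Vtilde H Phat d r h s = Ṽ_h(s)`, the optimistic value function of finite-horizon
extended value iteration: `Ṽ_{H+1}(s) = 0` and
`Ṽ_h(s) = max_{a} [ r(s,a) + max { ∑_{s'} q(s') Ṽ_{h+1}(s') : q ∈ Δ(S), ‖q − P̂(·|s,a)‖₁ ≤ d(s,a) } ]`. -/
noncomputable def Vtilde {S A : Type*} [Fintype S] [Fintype A] (H : ℕ)
    (Phat : S → A → S → ℝ) (d : S → A → ℝ) (r : S → A → ℝ) (h : ℕ) (s : S) : ℝ :=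
  optVal H Phat d r (H + 1 - h) s

/-!
The true kernel row `P(·|s,a)` is itself a feasible point of the inner maximization of extended
value iteration, so the Bellman backup of any policy under `P` is dominated by the optimistic
backup. Induction on the number of remaining steps gives `V^π_h ≤ Ṽ_h` for every policy `π`,
and taking the supremum over policies gives `V*_h ≤ Ṽ_h`.
-/

section Optimism

variable {S A : Type*} [Fintype S]

lemma IsProbVec.sum_mul_le {q W : S → ℝ} (hq : IsProbVec q) {M : ℝ} (hM : ∀ s, W s ≤ M) :
    ∑ s : S, q s * W s ≤ M :=
  calc ∑ s : S, q s * W s ≤ ∑ s : S, q s * M :=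
        Finset.sum_le_sum fun s _ => mul_le_mul_of_nonneg_left (hM s) (hq.1 s)
    _ = M := by rw [← Finset.sum_mul, hq.2, one_mul]

lemma innerOpt_bddAbove (phat : S → ℝ) (d : ℝ) (W : S → ℝ) :
    BddAbove { x : ℝ | ∃ q : S → ℝ, IsProbVec q ∧ (∑ s : S, |q s - phat s| ≤ d) ∧
      x = ∑ s : S, q s * W s } := by
  obtain ⟨M, hM⟩ := (Set.finite_range W).bddAbove
  refine ⟨M, ?_⟩
  rintro x ⟨q, hq, -, rfl⟩
  exact hq.sum_mul_le fun s => hM (Set.mem_range_self s)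

lemma sum_mul_le_innerOpt {phat q : S → ℝ} {d : ℝ} (W : S → ℝ)
    (hq : IsProbVec q) (hqd : ∑ s : S, |q s - phat s| ≤ d) :
    ∑ s : S, q s * W s ≤ innerOpt phat d W :=
  le_csSup (innerOpt_bddAbove phat d W) ⟨q, hq, hqd, rfl⟩

lemma add_innerOpt_le_optVal_succ [Fintype A] (H : ℕ) (Phat : S → A → S → ℝ)
    (d r : S → A → ℝ) (j : ℕ) (s : S) (a : A) :
    r s a + innerOpt (Phat s a) (d s a) (optVal H Phat d r j) ≤ optVal H Phat d r (j + 1) s :=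
  le_ciSup (Set.finite_range fun a' =>
    r s a' + innerOpt (Phat s a') (d s a') (optVal H Phat d r j)).bddAbove a

lemma polVal_le_optVal [Fintype A] {H : ℕ} {P Phat : S → A → S → ℝ} {d : S → A → ℝ}
    (hP : IsPlausible Phat d P) (r : S → A → ℝ) (π : S → ℕ → A) (j : ℕ) (s : S) :
    polVal H P r π j s ≤ optVal H Phat d r j s := by
  induction j generalizing s with
  | zero => simp only [polVal, optVal, le_refl]
  | succ j ih =>
    set a := π s (H - j)
    have backup_le : ∑ s' : S, P s a s' * polVal H P r π j s' ≤
        innerOpt (Phat s a) (d s a) (optVal H Phat d r j) :=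
      calc ∑ s' : S, P s a s' * polVal H P r π j s'
          ≤ ∑ s' : S, P s a s' * optVal H Phat d r j s' :=
            Finset.sum_le_sum fun s' _ => mul_le_mul_of_nonneg_left (ih s') ((hP s a).1.1 s')
        _ ≤ _ := sum_mul_le_innerOpt _ (hP s a).1 (hP s a).2
    calc polVal H P r π (j + 1) s = r s a + ∑ s' : S, P s a s' * polVal H P r π j s' := rfl
      _ ≤ r s a + innerOpt (Phat s a) (d s a) (optVal H Phat d r j) := by gcongr
      _ ≤ optVal H Phat d r (j + 1) s := add_innerOpt_le_optVal_succ H Phat d r j s a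

end Optimism

theorem optimism_general {S A : Type*}
    [Fintype S] [Fintype A] [Nonempty A]
    (H : ℕ)
    (P : S → A → S → ℝ) (hP : ∀ s a, IsProbVec (P s a))
    (Phat : S → A → S → ℝ)
    (d : S → A → ℝ)
    (hin : ∀ s a, ∑ s' : S, |P s a s' - Phat s a s'| ≤ d s a)
    (r : S → A → ℝ) :
    ∀ h ∈ Finset.Icc 1 (H + 1), ∀ s : S,
      Vstar H P r h s ≤ Vtilde H Phat d r h s := by
  intro h _ s
  exact ciSup_le fun π => polVal_le_optVal (fun s a => ⟨hP s a, hin s a⟩) r π (H + 1 - h) s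

/-- **Optimism.** If the true transition kernel `P` belongs to the plausible kernel
set, i.e. `‖P(·|s,a) − P̂(·|s,a)‖₁ ≤ d(s,a)` for every pair `(s,a)`, then the
optimistic value of extended value iteration upper-bounds the true optimal value:
`Ṽ_h(s) ≥ V*_h(s)` for every step `h ∈ {1,…,H+1}` and state `s ∈ S`. -/
theorem optimism {S A : Type*}
    [Fintype S] [Nonempty S] [Fintype A] [Nonempty A]
    (H : ℕ) (hH : 1 ≤ H)
    (P : S → A → S → ℝ) (hP : ∀ s a, IsProbVec (P s a))
    (Phat : S → A → S → ℝ) (hPhat : ∀ s a, IsProbVec (Phat s a))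
    (d : S → A → ℝ) (hd : ∀ s a, 0 ≤ d s a)
    (hin : ∀ s a, ∑ s' : S, |P s a s' - Phat s a s'| ≤ d s a)
    (r : S → A → ℝ) (hr : ∀ s a, r s a ∈ Set.Icc (0 : ℝ) 1) :
    ∀ h ∈ Finset.Icc 1 (H + 1), ∀ s : S,
      Vstar H P r h s ≤ Vtilde H Phat d r h s :=
  optimism_general H P hP Phat d hin r
end

section
/- Simulation lemma: let P and P̃ be two transition kernels on the same skeleton (S, A, H, r) with rewards r(s,a) ∈ [0,1], and suppose ‖P̃(·|s,a) − P(·|s,a)‖₁ ≤ d for all (s,a) ∈ S × A, where d ≥ 0. Then for every policy π and every state s ∈ S, |V^{P̃,π}_1(s) − V^{P,π}_1(s)| ≤ (d/4) · H · (H − 1). -/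
/-! With `j` steps to go the two values differ by
`(P̃ - P) Ṽ_j + P (Ṽ_j - V_j)`. Since `P̃ - P` has total mass zero and `Ṽ_j` ranges over
`[0, j]`, the first term is at most `d · j / 2` (centre `Ṽ_j` at `j / 2`), while the second
propagates the previous error. Summing `d · j / 2` over `j < H` gives `d · H (H - 1) / 4`. -/

open Finset Set

theorem sum_mul_mem_Icc_of_stochastic {ι : Type*} [Fintype ι] {p f : ι → ℝ} {a b : ℝ}
    (hp : (∀ i, 0 ≤ p i) ∧ ∑ i, p i = 1) (hf : ∀ i, f i ∈ Icc a b) :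
    ∑ i, p i * f i ∈ Icc a b :=
  (convex_Icc a b).sum_mem (fun i _ => hp.1 i) hp.2 (fun i _ => hf i)

theorem abs_sum_mul_le_of_sum_eq_zero {ι : Type*} [Fintype ι] {q f : ι → ℝ} {a b : ℝ}
    (hq : ∑ i, q i = 0) (hf : ∀ i, f i ∈ Icc a b) :
    |∑ i, q i * f i| ≤ (∑ i, |q i|) * ((b - a) / 2) := by
  have hcenter : ∑ i, q i * f i = ∑ i, q i * (f i - (a + b) / 2) := by
    simp only [mul_sub, sum_sub_distrib, ← sum_mul, hq, zero_mul, sub_zero]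
  rw [hcenter, sum_mul]
  refine (abs_sum_le_sum_abs _ _).trans (sum_le_sum fun i _ => ?_)
  rw [abs_mul]
  gcongr
  obtain ⟨hfa, hfb⟩ := hf i
  rw [abs_le]
  constructor <;> linarith

section polVal

variable {S A : Type*} [Fintype S] (H : ℕ) (r : S → A → ℝ) (π : S → ℕ → A)

theorem polVal_mem_Icc {P : S → A → S → ℝ}
    (hP : ∀ s a, (∀ s', 0 ≤ P s a s') ∧ ∑ s' : S, P s a s' = 1)
    (hr : ∀ s a, r s a ∈ Icc (0 : ℝ) 1) (j : ℕ) (s : S) :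
    polVal H P r π j s ∈ Icc (0 : ℝ) j := by
  induction j generalizing s with
  | zero => simp [polVal]
  | succ j ih =>
    obtain ⟨hr0, hr1⟩ := hr s (π s (H - j))
    obtain ⟨hv0, hv1⟩ := sum_mul_mem_Icc_of_stochastic (hP s (π s (H - j))) ih
    simp only [polVal, Nat.cast_succ, Set.mem_Icc]
    constructor <;> linarith

theorem polVal_succ_sub_polVal_succ (P Ptilde : S → A → S → ℝ) (j : ℕ) (s : S) :
    polVal H Ptilde r π (j + 1) s - polVal H P r π (j + 1) s =
      ∑ s', (Ptilde s (π s (H - j)) s' - P s (π s (H - j)) s') * polVal H Ptilde r π j s' +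
        ∑ s', P s (π s (H - j)) s' * (polVal H Ptilde r π j s' - polVal H P r π j s') := by
  simp only [polVal, ← sum_add_distrib]
  rw [add_sub_add_left_eq_sub, ← sum_sub_distrib]
  exact sum_congr rfl fun _ _ => by ring

theorem abs_polVal_sub_polVal_le {P Ptilde : S → A → S → ℝ}
    (hP : ∀ s a, (∀ s', 0 ≤ P s a s') ∧ ∑ s' : S, P s a s' = 1)
    (hPt : ∀ s a, (∀ s', 0 ≤ Ptilde s a s') ∧ ∑ s' : S, Ptilde s a s' = 1)
    {d : ℝ} (hclose : ∀ s a, ∑ s' : S, |Ptilde s a s' - P s a s'| ≤ d)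
    (hr : ∀ s a, r s a ∈ Icc (0 : ℝ) 1) (j : ℕ) (s : S) :
    |polVal H Ptilde r π j s - polVal H P r π j s| ≤ d * j * (j - 1) / 4 := by
  induction j generalizing s with
  | zero => simp [polVal]
  | succ j ih =>
    set a := π s (H - j)
    have hmass : ∑ s', (Ptilde s a s' - P s a s') = 0 := by
      rw [sum_sub_distrib, (hPt s a).2, (hP s a).2, sub_self]
    have hstep : |∑ s', (Ptilde s a s' - P s a s') * polVal H Ptilde r π j s'| ≤ d * j / 2 :=
      calc _ ≤ (∑ s', |Ptilde s a s' - P s a s'|) * ((j - 0) / 2) :=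
            abs_sum_mul_le_of_sum_eq_zero hmass (polVal_mem_Icc H r π hPt hr j)
        _ ≤ d * ((j - 0) / 2) :=
            mul_le_mul_of_nonneg_right (hclose s a) (by rw [sub_zero]; positivity)
        _ = d * j / 2 := by ring
    have hprop : |∑ s', P s a s' * (polVal H Ptilde r π j s' - polVal H P r π j s')|
        ≤ d * j * (j - 1) / 4 :=
      abs_le.mpr (sum_mul_mem_Icc_of_stochastic (hP s a) fun s' => abs_le.mp (ih s'))
    rw [polVal_succ_sub_polVal_succ]
    calc _ ≤ d * j / 2 + d * j * (j - 1) / 4 := (abs_add_le _ _).trans (add_le_add hstep hprop)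
      _ = d * ↑(j + 1) * (↑(j + 1) - 1) / 4 := by push_cast; ring

theorem Vpi_one (P : S → A → S → ℝ) (s : S) : Vpi H P r π 1 s = polVal H P r π H s := by
  simp [Vpi]

end polVal

theorem simulation_lemma_general {S A : Type*} [Fintype S]
    (H : ℕ)
    (P Ptilde : S → A → S → ℝ)
    (hP : ∀ s a, (∀ s', 0 ≤ P s a s') ∧ ∑ s' : S, P s a s' = 1)
    (hPt : ∀ s a, (∀ s', 0 ≤ Ptilde s a s') ∧ ∑ s' : S, Ptilde s a s' = 1)
    (d : ℝ)
    (hclose : ∀ s a, ∑ s' : S, |Ptilde s a s' - P s a s'| ≤ d)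
    (r : S → A → ℝ) (hr : ∀ s a, r s a ∈ Set.Icc (0 : ℝ) 1) :
    ∀ (π : S → ℕ → A) (s : S),
      |Vpi H Ptilde r π 1 s - Vpi H P r π 1 s| ≤ d / 4 * (H : ℝ) * ((H : ℝ) - 1) := by
  intro π s
  rw [Vpi_one, Vpi_one]
  calc _ ≤ d * H * (H - 1) / 4 := abs_polVal_sub_polVal_le H r π hP hPt hclose hr H s
    _ = d / 4 * H * (H - 1) := by ring

/-- **Simulation lemma.** If two transition kernels `P` and `P̃` on the same skeleton
`(S, A, H, r)` with rewards in `[0,1]` satisfy `‖P̃(·|s,a) − P(·|s,a)‖₁ ≤ d` for all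
`(s,a)`, then for every policy `π` and state `s`,
`|V^{P̃,π}_1(s) − V^{P,π}_1(s)| ≤ (d/4) · H · (H − 1)`. -/
theorem simulation_lemma {S A : Type*} [Fintype S] [Nonempty S] [Fintype A] [Nonempty A]
    (H : ℕ) (hH : 1 ≤ H)
    (P Ptilde : S → A → S → ℝ)
    (hP : ∀ s a, (∀ s', 0 ≤ P s a s') ∧ ∑ s' : S, P s a s' = 1)
    (hPt : ∀ s a, (∀ s', 0 ≤ Ptilde s a s') ∧ ∑ s' : S, Ptilde s a s' = 1)
    (d : ℝ) (hd : 0 ≤ d)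
    (hclose : ∀ s a, ∑ s' : S, |Ptilde s a s' - P s a s'| ≤ d)
    (r : S → A → ℝ) (hr : ∀ s a, r s a ∈ Set.Icc (0 : ℝ) 1) :
    ∀ (π : S → ℕ → A) (s : S),
      |Vpi H Ptilde r π 1 s - Vpi H P r π 1 s| ≤ d / 4 * (H : ℝ) * ((H : ℝ) - 1) :=
  simulation_lemma_general H P Ptilde hP hPt d hclose r hr
end

section
/- L1 concentration of the empirical distribution (the Hoeffding-type bound underlying the confidence width d_k(s,a)): let X_1, …, X_N be i.i.d. random variables on a probability space taking values in a finite set S of cardinality m, with common distribution p(s) = ℙ(X_1 = s), and let p̂(s) = (1/N) · #{ i ≤ N : X_i = s } be the empirical distribution. Then for every ε > 0, ℙ( ∑_{s∈S} |p̂(s) − p(s)| ≥ ε ) ≤ 2^m · exp(−N ε² / 2). Equivalently, for every δ ∈ (0,1], with probability at least 1 − δ, ∑_{s∈S} |p̂(s) − p(s)| ≤ √( 2 (m·log 2 + log(1/δ)) / N ). -/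
/-!
The ℓ¹ distance is a maximum of linear functionals: `∑ₛ |p̂ s - p s| = max_σ ∑ₛ σ s (p̂ s - p s)`
over the `2^m` sign vectors `σ : S → {±1}`. For a fixed `σ`, `N ∑ₛ σ s (p̂ s - p s)` is the sum of
the `N` independent centred variables `σ (X i) - 𝔼 σ (X i)`, each ranging over an interval of
length 2, so Hoeffding's inequality bounds its tail at `N ε` by `exp (-N ε² / 2)`. A union bound
over the signs gives the first claim; the second is the first at the `ε` for which the bound
equals `δ`.
-/

open MeasureTheory ProbabilityTheory Finset Real

noncomputable def empiricalFreq {Ω S : Type*} [DecidableEq S] (X : ℕ → Ω → S) (N : ℕ) (ω : Ω)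
    (s : S) : ℝ :=
  #{i ∈ range N | X i ω = s} / N

lemma sum_range_comp_eq_mul_sum_empiricalFreq {Ω S : Type*} [Fintype S] [DecidableEq S]
    (X : ℕ → Ω → S) {N : ℕ} (hN : N ≠ 0) (g : S → ℝ) (ω : Ω) :
    ∑ i ∈ range N, g (X i ω) = N * ∑ s, empiricalFreq X N ω s * g s := by
  rw [← sum_fiberwise' (range N) (fun i => X i ω) g, mul_sum]
  refine Finset.sum_congr rfl fun s _ => ?_
  rw [sum_const, nsmul_eq_mul, empiricalFreq, ← mul_assoc,
    mul_div_cancel₀ _ (by exact_mod_cast hN)]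

lemma exists_sum_sign_mul_eq_sum_abs {ι : Type*} [Fintype ι] (x : ι → ℝ) :
    ∃ σ : ι → Bool, ∑ i, (if σ i then 1 else -1) * x i = ∑ i, |x i| :=
  ⟨fun i => decide (0 ≤ x i), Finset.sum_congr rfl fun i _ => by
    by_cases h : 0 ≤ x i
    · simp [h, abs_of_nonneg h]
    · simp [h, abs_of_neg (not_le.mp h)]⟩

section

variable {Ω : Type*} [MeasurableSpace Ω] {μ : Measure Ω}
  {S : Type*} [Fintype S] [MeasurableSpace S] [MeasurableSingletonClass S]

lemma integral_comp_eq_sum_measureReal_preimage [IsFiniteMeasure μ] {Y : Ω → S}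
    (hY : AEMeasurable Y μ) (g : S → ℝ) :
    ∫ ω, g (Y ω) ∂μ = ∑ s, μ.real (Y ⁻¹' {s}) * g s := by
  rw [← integral_map hY (measurable_of_finite g).aestronglyMeasurable,
    integral_fintype Integrable.of_finite]
  refine Finset.sum_congr rfl fun s _ => ?_
  rw [smul_eq_mul, measureReal_def, measureReal_def,
    Measure.map_apply_of_aemeasurable hY (measurableSet_singleton s)]

lemma measureReal_sum_range_sub_integral_ge_le_of_mem_Icc [IsProbabilityMeasure μ] {Y : ℕ → Ω → ℝ}
    (hindep : iIndepFun Y μ) (hY : ∀ i, AEMeasurable (Y i) μ)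
    (hbound : ∀ i ω, Y i ω ∈ Set.Icc (-1 : ℝ) 1) (N : ℕ) {ε : ℝ} (hε : 0 ≤ ε) :
    μ.real {ω | ε ≤ ∑ i ∈ range N, (Y i ω - μ[Y i])} ≤ exp (-ε ^ 2 / (2 * N)) := by
  have hsubG : ∀ i < N, HasSubgaussianMGF (fun ω => Y i ω - μ[Y i]) 1 μ := fun i _ => by
    convert hasSubgaussianMGF_of_mem_Icc (hY i) (ae_of_all _ (hbound i))
    norm_num
  simpa using HasSubgaussianMGF.measure_sum_range_ge_le_of_iIndepFun
    (hindep.comp (fun i x => x - μ[Y i]) fun i => measurable_id.sub_const _) hsubG hε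

variable [IsProbabilityMeasure μ] {X : ℕ → Ω → S}

lemma integral_comp_eq_sum_of_identDistrib (hident : ∀ i, IdentDistrib (X i) (X 0) μ μ)
    (g : S → ℝ) (i : ℕ) : μ[fun ω => g (X i ω)] = ∑ s, μ.real (X 0 ⁻¹' {s}) * g s :=
  ((hident i).comp (measurable_of_finite g)).integral_eq.trans
    (integral_comp_eq_sum_measureReal_preimage (hident 0).aemeasurable_fst g)

variable [DecidableEq S]

lemma measureReal_sum_mul_empiricalFreq_sub_ge_le (hindep : iIndepFun X μ)
    (hident : ∀ i, IdentDistrib (X i) (X 0) μ μ) {f : S → ℝ}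
    (hf : ∀ s, f s ∈ Set.Icc (-1 : ℝ) 1) {N : ℕ} (hN : N ≠ 0) {ε : ℝ} (hε : 0 ≤ ε) :
    μ.real {ω | ε ≤ ∑ s, f s * (empiricalFreq X N ω s - μ.real (X 0 ⁻¹' {s}))}
      ≤ exp (-N * ε ^ 2 / 2) := by
  have hNpos : (0 : ℝ) < N := by exact_mod_cast Nat.pos_of_ne_zero hN
  have hsum : ∀ ω, ∑ i ∈ range N, (f (X i ω) - μ[fun ω => f (X i ω)])
      = N * ∑ s, f s * (empiricalFreq X N ω s - μ.real (X 0 ⁻¹' {s})) := fun ω => by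
    simp only [sum_sub_distrib, integral_comp_eq_sum_of_identDistrib hident, sum_const, card_range,
      nsmul_eq_mul, sum_range_comp_eq_mul_sum_empiricalFreq X hN f ω, mul_sub, mul_sum]
    congr 1 <;> exact sum_congr rfl fun _ _ => by ring
  have hoeffding := measureReal_sum_range_sub_integral_ge_le_of_mem_Icc (μ := μ)
    (hindep.comp (fun _ => f) fun _ => measurable_of_finite f)
    (fun i => (measurable_of_finite f).comp_aemeasurable (hident i).aemeasurable_fst)
    (fun i ω => hf (X i ω)) N (mul_nonneg hNpos.le hε)
  simp only [Function.comp_apply, hsum, mul_le_mul_iff_right₀ hNpos] at hoeffding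
  convert hoeffding using 2
  field_simp

theorem measureReal_sum_abs_empiricalFreq_sub_ge_le (hindep : iIndepFun X μ)
    (hident : ∀ i, IdentDistrib (X i) (X 0) μ μ) {N : ℕ} (hN : N ≠ 0) {ε : ℝ} (hε : 0 ≤ ε) :
    μ.real {ω | ε ≤ ∑ s, |empiricalFreq X N ω s - μ.real (X 0 ⁻¹' {s})|}
      ≤ 2 ^ Fintype.card S * exp (-N * ε ^ 2 / 2) := by
  have hcover : {ω | ε ≤ ∑ s, |empiricalFreq X N ω s - μ.real (X 0 ⁻¹' {s})|} ⊆
      ⋃ σ : S → Bool, {ω | ε ≤ ∑ s, (if σ s then 1 else -1) *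
        (empiricalFreq X N ω s - μ.real (X 0 ⁻¹' {s}))} := fun ω hω => by
    obtain ⟨σ, hσ⟩ := exists_sum_sign_mul_eq_sum_abs
      fun s => empiricalFreq X N ω s - μ.real (X 0 ⁻¹' {s})
    exact Set.mem_iUnion.mpr ⟨σ, hω.trans_eq hσ.symm⟩
  have hsign : ∀ (σ : S → Bool) s, (if σ s then 1 else -1 : ℝ) ∈ Set.Icc (-1 : ℝ) 1 :=
    fun σ s => by split <;> norm_num
  calc _ ≤ ∑ σ : S → Bool, μ.real {ω | ε ≤ ∑ s, (if σ s then 1 else -1) *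
          (empiricalFreq X N ω s - μ.real (X 0 ⁻¹' {s}))} :=
        (measureReal_mono hcover).trans (measureReal_iUnion_fintype_le _)
    _ ≤ ∑ _σ : S → Bool, exp (-N * ε ^ 2 / 2) := sum_le_sum fun σ _ =>
        measureReal_sum_mul_empiricalFreq_sub_ge_le hindep hident (hsign σ) hN hε
    _ = 2 ^ Fintype.card S * exp (-N * ε ^ 2 / 2) := by simp

end

lemma one_sub_le_measureReal_le_of_measureReal_ge_le {Ω : Type*} [MeasurableSpace Ω] {μ : Measure Ω}
    [IsProbabilityMeasure μ] {T : Ω → ℝ} {t δ : ℝ} (h : μ.real {ω | t ≤ T ω} ≤ δ) :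
    1 - δ ≤ μ.real {ω | T ω ≤ t} := by
  have hcompl : {ω | T ω ≤ t}ᶜ ⊆ {ω | t ≤ T ω} :=
    fun ω (hω : ¬T ω ≤ t) => (not_le.mp hω).le
  have := measureReal_union_le (μ := μ) {ω | T ω ≤ t} {ω | T ω ≤ t}ᶜ
  rw [Set.union_compl_self, probReal_univ] at this
  linarith [measureReal_mono (μ := μ) hcompl]

lemma two_pow_mul_exp_neg_mul_sqrt_sq (m : ℕ) {N δ : ℝ} (hN : 0 < N) (hδ0 : 0 < δ)
    (hδ1 : δ ≤ 1) :
    2 ^ m * exp (-N * sqrt (2 * (m * log 2 + log (1 / δ)) / N) ^ 2 / 2) = δ := by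
  have hlog : 0 ≤ m * log 2 + log (1 / δ) :=
    add_nonneg (mul_nonneg m.cast_nonneg (log_nonneg one_le_two))
      (log_nonneg (one_le_one_div hδ0 hδ1))
  rw [sq_sqrt (by positivity)]
  field_simp
  rw [neg_add, exp_add, ← log_rpow zero_lt_two, exp_neg, exp_log (by positivity), exp_neg,
    exp_log (by positivity)]
  field_simp
  norm_cast

theorem empirical_l1_concentration_general {Ω : Type*} [MeasurableSpace Ω]
    (μ : Measure Ω) [IsProbabilityMeasure μ]
    {S : Type*} [Fintype S] [DecidableEq S] [MeasurableSpace S] [MeasurableSingletonClass S]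
    (m : ℕ) (hm : Fintype.card S = m) (N : ℕ) (hN : 1 ≤ N)
    (X : ℕ → Ω → S)
    (hindep : iIndepFun X μ)
    (hident : ∀ i, IdentDistrib (X i) (X 0) μ μ)
    (p : S → ℝ) (hp : ∀ s, p s = (μ {ω | X 0 ω = s}).toReal)
    (phat : Ω → S → ℝ)
    (hphat : ∀ ω s,
      phat ω s = (((Finset.range N).filter (fun i => X i ω = s)).card : ℝ) / N) :
    (∀ ε : ℝ, 0 < ε →
        (μ {ω | ε ≤ ∑ s : S, |phat ω s - p s|}).toReal
          ≤ 2 ^ m * Real.exp (-(N : ℝ) * ε ^ 2 / 2)) ∧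
      ∀ δ : ℝ, 0 < δ → δ ≤ 1 →
        1 - δ ≤ (μ {ω | ∑ s : S, |phat ω s - p s|
          ≤ Real.sqrt (2 * ((m : ℝ) * Real.log 2 + Real.log (1 / δ)) / N)}).toReal := by
  obtain rfl : p = fun s => μ.real (X 0 ⁻¹' {s}) := funext hp
  obtain rfl : phat = empiricalFreq X N := funext fun ω => funext (hphat ω)
  have tail (ε : ℝ) (hε : 0 ≤ ε) := hm ▸
    measureReal_sum_abs_empiricalFreq_sub_ge_le hindep hident (by omega : N ≠ 0) hε
  refine ⟨fun ε hε => tail ε hε.le, fun δ hδ0 hδ1 => ?_⟩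
  exact one_sub_le_measureReal_le_of_measureReal_ge_le <| (tail _ (sqrt_nonneg _)).trans_eq
    (two_pow_mul_exp_neg_mul_sqrt_sq m (by exact_mod_cast hN) hδ0 hδ1)

/-- **L1 concentration of the empirical distribution** (the Hoeffding-type bound
underlying the confidence width `d_k(s,a)`). Let `X_1, …, X_N` be i.i.d. random
variables with values in a finite set `S` of cardinality `m`, common distribution
`p(s) = ℙ(X_1 = s)`, and empirical distribution
`p̂(s) = (1/N) #{ i ≤ N : X_i = s }`. Then for every `ε > 0`,
`ℙ(‖p̂ − p‖₁ ≥ ε) ≤ 2^m exp(−N ε² / 2)`; equivalently, for every `δ ∈ (0,1]`, with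
probability at least `1 − δ`,
`‖p̂ − p‖₁ ≤ √(2 (m log 2 + log(1/δ)) / N)`. -/
theorem empirical_l1_concentration {Ω : Type*} [MeasurableSpace Ω]
    (μ : Measure Ω) [IsProbabilityMeasure μ]
    {S : Type*} [Fintype S] [DecidableEq S] [MeasurableSpace S] [MeasurableSingletonClass S]
    (m : ℕ) (hm : Fintype.card S = m) (N : ℕ) (hN : 1 ≤ N)
    (X : ℕ → Ω → S) (hmeas : ∀ i, Measurable (X i))
    (hindep : iIndepFun X μ)
    (hident : ∀ i, IdentDistrib (X i) (X 0) μ μ)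
    (p : S → ℝ) (hp : ∀ s, p s = (μ {ω | X 0 ω = s}).toReal)
    (phat : Ω → S → ℝ)
    (hphat : ∀ ω s,
      phat ω s = (((Finset.range N).filter (fun i => X i ω = s)).card : ℝ) / N) :
    (∀ ε : ℝ, 0 < ε →
        (μ {ω | ε ≤ ∑ s : S, |phat ω s - p s|}).toReal
          ≤ 2 ^ m * Real.exp (-(N : ℝ) * ε ^ 2 / 2)) ∧
      ∀ δ : ℝ, 0 < δ → δ ≤ 1 →
        1 - δ ≤ (μ {ω | ∑ s : S, |phat ω s - p s|
          ≤ Real.sqrt (2 * ((m : ℝ) * Real.log 2 + Real.log (1 / δ)) / N)}).toReal :=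
  empirical_l1_concentration_general μ m hm N hN X hindep hident p hp phat hphat
end

section
/- Counting lemma for visitation counts: let Z be a finite set with |Z| = n, let T ≥ 1, and let z_1, …, z_T ∈ Z be an arbitrary sequence. For each t ∈ {1,…,T}, let N_t = #{ i < t : z_i = z_t } be the number of previous occurrences of z_t. Then ∑_{t=1}^T 1/√(max(1, N_t)) ≤ n + 2√(n T). -/
/-!
Split the sum according to the value of `z t`. On the fiber of `a`, the visit counts `N_t`
run through `0, 1, …, m_a - 1`, where `m_a` is the number of visits to `a`, so the fiber
contributes at most `1 + ∑_{k=1}^{m_a-1} 1/√k ≤ 1 + 2√m_a`. Summing over the `n` values and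
using Cauchy–Schwarz, `∑_a √m_a ≤ √(n ∑_a m_a) = √(n T)`.
-/

open Finset

/-- `2 (√(m+1) - √m) = 2 / (√(m+1) + √m) ≥ 1 / √(m+1)`. -/
lemma one_div_sqrt_succ_le_two_mul_sub (m : ℕ) :
    1 / √((m + 1 : ℕ) : ℝ) ≤ 2 * (√((m + 1 : ℕ) : ℝ) - √(m : ℝ)) := by
  have hpos : 0 < √((m + 1 : ℕ) : ℝ) := Real.sqrt_pos.2 (by positivity)
  have hsq : √((m + 1 : ℕ) : ℝ) ^ 2 = √(m : ℝ) ^ 2 + 1 := by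
    rw [Real.sq_sqrt (by positivity), Real.sq_sqrt (by positivity)]; push_cast; ring
  rw [div_le_iff₀ hpos]
  nlinarith [sq_nonneg (√(m : ℝ) - √((m + 1 : ℕ) : ℝ)), Real.sqrt_nonneg (m : ℝ)]

lemma sum_range_one_div_sqrt_succ_le (m : ℕ) :
    ∑ k ∈ range m, 1 / √((k + 1 : ℕ) : ℝ) ≤ 2 * √(m : ℝ) := by
  induction m with
  | zero => simp
  | succ m ih =>
    rw [sum_range_succ]
    linarith [one_div_sqrt_succ_le_two_mul_sub m]

lemma sum_range_one_div_sqrt_max_one_le (m : ℕ) :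
    ∑ k ∈ range m, 1 / √(max 1 (k : ℝ)) ≤ 1 + 2 * √(m : ℝ) := by
  cases m with
  | zero => simp
  | succ m =>
    have hterms : ∀ k : ℕ, max 1 ((k + 1 : ℕ) : ℝ) = ((k + 1 : ℕ) : ℝ) := fun k =>
      max_eq_right (by exact_mod_cast Nat.succ_pos k)
    have hmono : √(m : ℝ) ≤ √((m + 1 : ℕ) : ℝ) := Real.sqrt_le_sqrt (by push_cast; linarith)
    rw [sum_range_succ', Nat.cast_zero, max_eq_left zero_le_one, Real.sqrt_one]
    simp only [hterms]
    linarith [sum_range_one_div_sqrt_succ_le m]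

/-- The rank `#{i ∈ s | i < t}` is a bijection from `s` onto `range #s`. -/
lemma Finset.sum_card_filter_lt {α M : Type*} [LinearOrder α] [AddCommMonoid M]
    (s : Finset α) (g : ℕ → M) :
    ∑ t ∈ s, g #{i ∈ s | i < t} = ∑ k ∈ range #s, g k := by
  induction s using Finset.induction_on_max with
  | empty => simp
  | insert a s hlt ih =>
    have ha : a ∉ s := fun h => lt_irrefl a (hlt a h)
    have hrank_a : #{i ∈ insert a s | i < a} = #s := by
      rw [filter_insert, if_neg (lt_irrefl a), filter_true_of_mem hlt]
    have hrank_s : ∀ t ∈ s, {i ∈ insert a s | i < t} = {i ∈ s | i < t} := fun t ht => by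
      rw [filter_insert, if_neg (hlt t ht).asymm]
    rw [sum_insert ha, card_insert_of_notMem ha, sum_range_succ, hrank_a, add_comm,
      sum_congr rfl fun t ht => by rw [hrank_s t ht], ih]

lemma filter_Ico_eq_eq_filter_lt {Z : Type*} [DecidableEq Z] (z : ℕ → Z) {T t : ℕ}
    (ht : t ∈ Icc 1 T) :
    {i ∈ Ico 1 t | z i = z t} = {i ∈ {s ∈ Icc 1 T | z s = z t} | i < t} := by
  ext i
  simp only [mem_filter, mem_Ico, mem_Icc] at ht ⊢
  have : i < t → i ≤ T := by omega
  tauto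

lemma sum_sqrt_le_sqrt_card_mul_sum {ι : Type*} (s : Finset ι) (c : ι → ℝ)
    (hc : ∀ i, 0 ≤ c i) :
    ∑ i ∈ s, √(c i) ≤ √(#s * ∑ i ∈ s, c i) := by
  simpa [Real.sqrt_mul (Nat.cast_nonneg _)] using
    Real.sum_sqrt_mul_sqrt_le s (fun _ => zero_le_one) hc

theorem visitation_counting_lemma_general {Z : Type*} [Fintype Z] [DecidableEq Z]
    (n : ℕ) (hn : Fintype.card Z = n) (T : ℕ) (z : ℕ → Z) :
    ∑ t ∈ Finset.Icc 1 T,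
        (1 : ℝ) / Real.sqrt (max 1 (((Finset.Ico 1 t).filter (fun i => z i = z t)).card : ℝ))
      ≤ (n : ℝ) + 2 * Real.sqrt ((n : ℝ) * (T : ℝ)) := by
  set S : Z → Finset ℕ := fun a => {t ∈ Icc 1 T | z t = a}
  have hvisits : ∑ a, (#(S a) : ℝ) = T := by
    rw [← Nat.cast_sum, ← card_eq_sum_card_fiberwise fun _ _ => mem_univ _, Nat.card_Icc,
      Nat.add_sub_cancel]
  calc ∑ t ∈ Icc 1 T, 1 / √(max 1 (#{i ∈ Ico 1 t | z i = z t} : ℝ))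
      = ∑ a, ∑ t ∈ S a, 1 / √(max 1 (#{i ∈ S a | i < t} : ℝ)) := by
        rw [← sum_fiberwise (Icc 1 T) z]
        refine sum_congr rfl fun a _ => sum_congr rfl fun t ht => ?_
        obtain ⟨htT, rfl⟩ := mem_filter.1 ht
        rw [filter_Ico_eq_eq_filter_lt z htT]
    _ = ∑ a, ∑ k ∈ range #(S a), 1 / √(max 1 (k : ℝ)) :=
        sum_congr rfl fun a _ => sum_card_filter_lt (S a) fun k => 1 / √(max 1 (k : ℝ))
    _ ≤ ∑ a, (1 + 2 * √(#(S a) : ℝ)) :=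
        sum_le_sum fun a _ => sum_range_one_div_sqrt_max_one_le _
    _ = n + 2 * ∑ a, √(#(S a) : ℝ) := by
        rw [sum_add_distrib, ← mul_sum, sum_const, card_univ, hn, nsmul_one]
    _ ≤ n + 2 * √(n * T) := by
        have := sum_sqrt_le_sqrt_card_mul_sum univ (fun a => (#(S a) : ℝ)) fun _ => by positivity
        rw [card_univ, hn, hvisits] at this
        linarith

/-- **Counting lemma for visitation counts.** Let `Z` be a finite set of cardinality
`n`, `T ≥ 1`, and `z_1, …, z_T ∈ Z` an arbitrary sequence. With
`N_t = #{ i < t : z_i = z_t }` the number of previous occurrences of `z_t` (indices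
ranging over `1 ≤ i < t`), we have `∑_{t=1}^T 1/√(max(1, N_t)) ≤ n + 2 √(n T)`. -/
theorem visitation_counting_lemma {Z : Type*} [Fintype Z] [DecidableEq Z]
    (n : ℕ) (hn : Fintype.card Z = n) (T : ℕ) (hT : 1 ≤ T) (z : ℕ → Z) :
    ∑ t ∈ Finset.Icc 1 T,
        (1 : ℝ) / Real.sqrt (max 1 (((Finset.Ico 1 t).filter (fun i => z i = z t)).card : ℝ))
      ≤ (n : ℝ) + 2 * Real.sqrt ((n : ℝ) * (T : ℝ)) :=
  visitation_counting_lemma_general n hn T z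
end
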